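/- Let C be a dual k-linear category on X with associated k-linear category A. Suppose M is a right A-module, i.e., there are k-bilinear maps M_{x,z} × A_{z,y} → M_{x,y}, (m, a) ↦ m·a, with (m·a)·b = m·(ab) for a ∈ A_{z,y}, b ∈ A_{y,u}, and m·ε_z = m for m ∈ M_{x,z}. Suppose moreover that for each pair (y,z) there are finite dual basis data: elements a_i^{y,z} ∈ A_{z,y} and c_i^{y,z} ∈ C_{y,z} (i in a finite index set) with Σ_i ⟨a_i^{y,z}, c⟩ c_i^{y,z} = c for every c ∈ C_{y,z}. Then ρ_{x,y,z}(m) = Σ_i (m·a_i^{y,z}) ⊗ c_i^{y,z} defines a right C-comodule structure on M (it satisfies the coassociativity and counit conditions), and the A-action recovered from this coaction by m·a = ⟨a, m_[1,y]⟩ m_[0,y] coincides with the original action. -/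
import Mathlib


open TensorProduct

noncomputable def dualMul
    {k : Type*} [CommRing k] {X : Type*}
    (C : X → X → Type*)
    [∀ x y, AddCommGroup (C x y)] [∀ x y, Module k (C x y)]
    (Δ : ∀ x y z, C x z →ₗ[k] C x y ⊗[k] C y z)
    (x y z : X) (a : C y x →ₗ[k] k) (b : C z y →ₗ[k] k) : C z x →ₗ[k] k :=
  (LinearMap.mul' k k) ∘ₗ (TensorProduct.map b a) ∘ₗ (Δ z y x)

/-- The coaction built from a right module structure and finite dual basis data. -/
noncomputable def rhoOf
    {k : Type*} [CommRing k] {X : Type*}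
    (C : X → X → Type*)
    [∀ x y, AddCommGroup (C x y)] [∀ x y, Module k (C x y)]
    (M : X → X → Type*)
    [∀ x y, AddCommGroup (M x y)] [∀ x y, Module k (M x y)]
    (act : ∀ x z y, M x z →ₗ[k] (C y z →ₗ[k] k) →ₗ[k] M x y)
    (n : X → X → ℕ)
    (e : ∀ y z, Fin (n y z) → (C y z →ₗ[k] k))
    (c : ∀ y z, Fin (n y z) → C y z)
    (x y z : X) : M x z →ₗ[k] M x y ⊗[k] C y z :=
  ∑ i : Fin (n y z),
    ((TensorProduct.mk k (M x y) (C y z)).flip (c y z i)).comp ((act x z y).flip (e y z i))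

theorem module_gives_comodule_over_dual
    {k : Type*} [CommRing k] {X : Type*}
    (C : X → X → Type*)
    [∀ x y, AddCommGroup (C x y)] [∀ x y, Module k (C x y)]
    (Δ : ∀ x y z, C x z →ₗ[k] C x y ⊗[k] C y z)
    (ε : ∀ x, C x x →ₗ[k] k)
    (coassoc : ∀ x y z u (c : C x u),
      (TensorProduct.map (Δ x y z) LinearMap.id) (Δ x z u c)
        = (TensorProduct.assoc k (C x y) (C y z) (C z u)).symm
            ((TensorProduct.map LinearMap.id (Δ y z u)) (Δ x y u c)))
    (counit_left : ∀ x y (c : C x y),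
      (TensorProduct.lid k (C x y)) ((TensorProduct.map (ε x) LinearMap.id) (Δ x x y c)) = c)
    (counit_right : ∀ x y (c : C x y),
      (TensorProduct.rid k (C x y)) ((TensorProduct.map LinearMap.id (ε y)) (Δ x y y c)) = c)
    (M : X → X → Type*)
    [∀ x y, AddCommGroup (M x y)] [∀ x y, Module k (M x y)]
    (act : ∀ x z y, M x z →ₗ[k] (C y z →ₗ[k] k) →ₗ[k] M x y)
    (act_assoc : ∀ x z y u (m : M x z) (a : C y z →ₗ[k] k) (b : C u y →ₗ[k] k),
      act x y u (act x z y m a) b = act x z u m (dualMul C Δ z y u a b))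
    (act_one : ∀ x z (m : M x z), act x z z m (ε z) = m)
    (n : X → X → ℕ)
    (e : ∀ y z, Fin (n y z) → (C y z →ₗ[k] k))
    (c : ∀ y z, Fin (n y z) → C y z)
    (dual_basis : ∀ y z (v : C y z), ∑ i : Fin (n y z), (e y z i v) • c y z i = v) :
    (∀ x u y z (m : M x z),
        (TensorProduct.map (rhoOf C M act n e c x u y) LinearMap.id)
            (rhoOf C M act n e c x y z m)
          = (TensorProduct.assoc k (M x u) (C u y) (C y z)).symm
              ((TensorProduct.map LinearMap.id (Δ u y z)) (rhoOf C M act n e c x u z m)))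
    ∧ (∀ x z (m : M x z),
        (TensorProduct.rid k (M x z))
            ((TensorProduct.map LinearMap.id (ε z)) (rhoOf C M act n e c x z z m)) = m)
    ∧ (∀ x z y (m : M x z) (a : C y z →ₗ[k] k),
        (TensorProduct.rid k (M x y))
            ((TensorProduct.map LinearMap.id a) (rhoOf C M act n e c x y z m))
          = act x z y m a) := by
  classical
  have key : ∀ y z (f : C y z →ₗ[k] k), (∑ i, (f (c y z i)) • e y z i) = f := by
    intro y z f
    ext v
    have h := congrArg f (dual_basis y z v)
    simp only [map_sum, map_smul, smul_eq_mul] at h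
    simpa [LinearMap.sum_apply, LinearMap.smul_apply, smul_eq_mul, mul_comm] using h
  have act_key : ∀ x z y (m : M x z) (f : C y z →ₗ[k] k),
      (∑ i, (f (c y z i)) • act x z y m (e y z i)) = act x z y m f := by
    intro x z y m f
    conv_rhs => rw [← key y z f]
    rw [map_sum]
    simp
  have rho_apply : ∀ x y z (m : M x z),
      rhoOf C M act n e c x y z m = ∑ i, (act x z y m (e y z i)) ⊗ₜ[k] c y z i := by
    intro x y z m
    simp [rhoOf, LinearMap.sum_apply, TensorProduct.mk_apply]
  have third : ∀ x z y (m : M x z) (a : C y z →ₗ[k] k),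
      (TensorProduct.rid k (M x y))
          ((TensorProduct.map LinearMap.id a) (rhoOf C M act n e c x y z m))
        = act x z y m a := by
    intro x z y m a
    rw [rho_apply, ← act_key x z y m a, map_sum, map_sum]
    simp
  have expand : ∀ u y z (t : C u y ⊗[k] C y z),
      t = ∑ j, ∑ l, (LinearMap.mul' k k (TensorProduct.map (e u y j) (e y z l) t))
            • (c u y j ⊗ₜ[k] c y z l) := by
    intro u y z t
    induction t using TensorProduct.induction_on with
    | zero => simp
    | tmul a b =>
        conv_lhs => rw [← dual_basis u y a, ← dual_basis y z b]
        rw [TensorProduct.sum_tmul]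
        refine Finset.sum_congr rfl fun j _ => ?_
        rw [TensorProduct.tmul_sum]
        refine Finset.sum_congr rfl fun l _ => ?_
        simp only [TensorProduct.map_tmul, LinearMap.mul'_apply]
        simp only [TensorProduct.smul_tmul', TensorProduct.tmul_smul, smul_smul]
        rw [mul_comm]
    | add s t hs ht =>
        conv_lhs => rw [hs, ht]
        simp [map_add, add_smul, Finset.sum_add_distrib]
  refine ⟨?_, ?_, ?_⟩
  · intro x u y z m
    rw [rho_apply x y z m, rho_apply x u z m, map_sum, map_sum]
    simp only [TensorProduct.map_tmul, LinearMap.id_coe, id_eq]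
    trans ∑ l, ∑ j, ((act x z u m (dualMul C Δ z y u (e y z l) (e u y j)))
        ⊗ₜ[k] c u y j) ⊗ₜ[k] c y z l
    · refine Finset.sum_congr rfl fun l _ => ?_
      rw [rho_apply, TensorProduct.sum_tmul]
      refine Finset.sum_congr rfl fun j _ => ?_
      rw [act_assoc]
    · rw [eq_comm]
      trans ∑ i, ∑ j, ∑ l, ((LinearMap.mul' k k
            (TensorProduct.map (e u y j) (e y z l) (Δ u y z (c u z i))))
          • ((act x z u m (e u z i)) ⊗ₜ[k] c u y j)) ⊗ₜ[k] c y z l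
      · rw [map_sum]
        refine Finset.sum_congr rfl fun i _ => ?_
        conv_lhs => rw [expand u y z (Δ u y z (c u z i))]
        rw [TensorProduct.tmul_sum, map_sum]
        refine Finset.sum_congr rfl fun j _ => ?_
        rw [TensorProduct.tmul_sum, map_sum]
        refine Finset.sum_congr rfl fun l _ => ?_
        rw [TensorProduct.tmul_smul, map_smul, TensorProduct.assoc_symm_tmul,
          TensorProduct.smul_tmul']
      · refine Finset.sum_comm.trans ?_
        refine (Finset.sum_congr rfl fun j _ => Finset.sum_comm).trans ?_
        refine Finset.sum_comm.trans ?_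
        refine Finset.sum_congr rfl fun l _ => ?_
        refine Finset.sum_congr rfl fun j _ => ?_
        rw [← TensorProduct.sum_tmul]
        congr 1
        simp only [TensorProduct.smul_tmul']
        rw [← TensorProduct.sum_tmul]
        congr 1
        exact act_key x z u m (dualMul C Δ z y u (e y z l) (e u y j))
  · intro x z m
    rw [third x z z m (ε z), act_one]
  · intro x z y m a
    exact third x z y m a
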